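/- Let 1 ≤ k ≤ n, let p₁,…,p_k > 0 and d₁,…,dₙ be reals with dᵢ ≥ max(p₁,…,p_k) for all i, and let λ₁,…,λₙ ≥ 0 with D = Σλᵢdᵢ and Λ = Σλᵢ. Then the n-dimensional Lebesgue volume of the polytope 𝔖₀ = { u ∈ ℝⁿ : uᵢ ≥ 0, u₁+⋯+uₙ ≤ D, u₁/p₁+⋯+u_k/p_k ≤ Λ } equals p₁⋯p_k · Σ_{δ=0}^{n-k} (-1)^δ · D^{n-k-δ}/(n-k-δ)! · Λ^{k+δ}/(δ+k)! · h_δ(p₁,…,p_k). -/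

import Mathlib

/-!
Write `n = k + m` and split `u ∈ ℝⁿ` as `(x, y) ∈ ℝᵏ × ℝᵐ`. Substituting `x = p • v`
(Jacobian `p₁⋯p_k`) turns `𝔖₀` into the set of `(v, y)` with `v` in the simplex
`{v ≥ 0, Σ vⱼ ≤ Λ}` and `y` in the simplex of size `D - Σ pⱼ vⱼ`, which is nonnegative because
`D ≥ Λ · max pⱼ`. Hence the volume is `p₁⋯p_k ∫ (D - Σ pⱼ vⱼ)ᵐ / m!` over the `Λ`-simplex.
Expanding binomially in `D` and multinomially in `Σ pⱼ vⱼ` leaves Dirichlet's integrals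
`∫ ∏ vᵢ ^ αᵢ = ∏ αᵢ! Λ ^ (k + |α|) / (k + |α|)!`, which follow by induction on `k` from the beta
integral, and `countPerms` times `∏ αᵢ!` collapses to `δ!`, leaving `h_δ(p)`.
-/

open MeasureTheory Finset

def simplex (k : ℕ) (L : ℝ) : Set (Fin k → ℝ) := {v | (∀ i, 0 ≤ v i) ∧ ∑ i, v i ≤ L}

def fibredSimplex {X : Type*} (A : Set X) (f : X → ℝ) (m : ℕ) : Set (X × (Fin m → ℝ)) :=
  {z | z.1 ∈ A ∧ z.2 ∈ simplex m (f z.1)}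

lemma isClosed_simplex (k : ℕ) (L : ℝ) : IsClosed (simplex k L) :=
  isClosed_Ici.inter (isClosed_le (continuous_finsetSum _ fun i _ => continuous_apply i)
    continuous_const)

lemma measurableSet_simplex (k : ℕ) (L : ℝ) : MeasurableSet (simplex k L) :=
  (isClosed_simplex k L).measurableSet

lemma isCompact_simplex (k : ℕ) (L : ℝ) : IsCompact (simplex k L) :=
  isCompact_Icc.of_isClosed_subset (isClosed_simplex k L) fun _ ⟨hv, hsum⟩ =>
    ⟨hv, fun i => (single_le_sum (fun j _ => hv j) (mem_univ i)).trans hsum⟩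

lemma cons_mem_simplex_iff {k : ℕ} {L t : ℝ} {w : Fin k → ℝ} :
    Fin.cons t w ∈ simplex (k + 1) L ↔ t ∈ Set.Icc 0 L ∧ w ∈ simplex k (L - t) := by
  simp only [simplex, Set.mem_ofPred_eq, Fin.forall_fin_succ, Fin.sum_univ_succ, Fin.cons_zero,
    Fin.cons_succ, Set.mem_Icc]
  constructor
  · rintro ⟨⟨ht, hw⟩, hsum⟩
    exact ⟨⟨ht, by linarith [sum_nonneg fun i (_ : i ∈ univ) => hw i]⟩, hw, by linarith⟩
  · rintro ⟨⟨ht, -⟩, hw, hsum⟩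
    exact ⟨⟨ht, hw⟩, by linarith⟩

lemma sum_mul_le_sum_mul_of_mem_simplex {ι : Type*} [Fintype ι] {k : ℕ} (hk : 0 < k)
    {p v : Fin k → ℝ} {d l : ι → ℝ} (hp : ∀ j, 0 ≤ p j) (hd : ∀ i j, p j ≤ d i)
    (hl : ∀ i, 0 ≤ l i) (hv : v ∈ simplex k (∑ i, l i)) :
    ∑ j, p j * v j ≤ ∑ i, l i * d i := by
  have hne : (univ : Finset (Fin k)).Nonempty := ⟨⟨0, hk⟩, mem_univ _⟩
  set M := univ.sup' hne p
  calc ∑ j, p j * v j ≤ ∑ j, M * v j :=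
        sum_le_sum fun j _ => mul_le_mul_of_nonneg_right (le_sup' p (mem_univ j)) (hv.1 j)
    _ ≤ M * ∑ i, l i := by
        rw [← mul_sum]
        exact mul_le_mul_of_nonneg_left hv.2 ((hp _).trans (le_sup' p (mem_univ ⟨0, hk⟩)))
    _ ≤ ∑ i, l i * d i := by
        rw [mul_sum]
        exact sum_le_sum fun i _ => by
          rw [mul_comm]
          exact mul_le_mul_of_nonneg_left (sup'_le _ _ fun j _ => hd i j) (hl i)

lemma measurableSet_fibredSimplex {X : Type*} [MeasurableSpace X] {A : Set X}
    (hA : MeasurableSet A) {f : X → ℝ} (hf : Measurable f) (m : ℕ) :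
    MeasurableSet (fibredSimplex A f m) :=
  (measurable_fst hA).inter <| (measurable_snd measurableSet_Ici).inter <|
    measurableSet_le (by fun_prop) (hf.comp measurable_fst)

lemma setLIntegral_fibredSimplex {X : Type*} [MeasurableSpace X] (μ : Measure X) {A : Set X}
    (hA : MeasurableSet A) {f : X → ℝ} (hf : Measurable f) {m : ℕ}
    {g : X × (Fin m → ℝ) → ENNReal} (hg : Measurable g) :
    ∫⁻ z in fibredSimplex A f m, g z ∂μ.prod volume
      = ∫⁻ x in A, ∫⁻ y in simplex m (f x), g (x, y) ∂volume ∂μ := by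
  have hP := measurableSet_fibredSimplex hA hf m
  rw [← lintegral_indicator hP, lintegral_prod _ (hg.indicator hP).aemeasurable,
    ← lintegral_indicator hA]
  congr 1 with x
  by_cases hx : x ∈ A
  · rw [Set.indicator_of_mem hx, ← lintegral_indicator (measurableSet_simplex m (f x))]
    congr 1 with y
    by_cases hy : y ∈ simplex m (f x) <;> simp [fibredSimplex, Set.indicator, hx, hy]
  · simp [fibredSimplex, Set.indicator, hx]

lemma measurePreserving_finCons (k : ℕ) :
    MeasurePreserving (fun z : ℝ × (Fin k → ℝ) => (Fin.cons z.1 z.2 : Fin (k + 1) → ℝ)) := by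
  have := (measurePreserving_piFinSuccAbove (fun _ : Fin (k + 1) => (volume : Measure ℝ)) 0).symm
  rw [← volume_pi, ← volume_pi, ← Measure.volume_eq_prod] at this
  convert this using 1
  ext z : 1
  simp [MeasurableEquiv.piFinSuccAbove_symm_apply, Fin.insertNthEquiv, Fin.insertNth_zero']

lemma measurePreserving_finAppend (k m : ℕ) :
    MeasurePreserving (fun z : (Fin k → ℝ) × (Fin m → ℝ) => Fin.append z.1 z.2) := by
  have happend : (fun z : (Fin k → ℝ) × (Fin m → ℝ) => Fin.append z.1 z.2) =
      MeasurableEquiv.piCongrLeft (fun _ => ℝ) finSumFinEquiv ∘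
        (MeasurableEquiv.sumPiEquivProdPi fun _ : Fin k ⊕ Fin m => ℝ).symm := by
    ext z i
    rw [Function.comp_apply, ← finSumFinEquiv.apply_symm_apply i, MeasurableEquiv.coe_piCongrLeft,
      Equiv.piCongrLeft_apply_apply]
    rcases finSumFinEquiv.symm i with j | j <;> simp [MeasurableEquiv.sumPiEquivProdPi]
  rw [happend]
  exact (volume_measurePreserving_piCongrLeft _ _).comp
    (volume_measurePreserving_sumPiEquivProdPi_symm _)

lemma volume_preimage_mul_fst {ι κ : Type*} [Fintype ι] [Fintype κ] [DecidableEq ι]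
    {c : ι → ℝ} (hc : ∀ i, c i ≠ 0) (s : Set ((ι → ℝ) × (κ → ℝ))) :
    volume ((fun z : (ι → ℝ) × (κ → ℝ) => (c * z.1, z.2)) ⁻¹' s)
      = ENNReal.ofReal |(∏ i, c i)⁻¹| * volume s := by
  let f := (Matrix.toLin' (Matrix.diagonal c)).prodMap (LinearMap.id : (κ → ℝ) →ₗ[ℝ] κ → ℝ)
  have hf : ⇑f = fun z : (ι → ℝ) × (κ → ℝ) => (c * z.1, z.2) := by
    funext z
    ext i <;> simp [f, Matrix.mulVec_diagonal]
  have hdet : LinearMap.det f = ∏ i, c i := by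
    simp [f, LinearMap.det_prodMap, LinearMap.det_toLin', Matrix.det_diagonal]
  have : (volume : Measure ((ι → ℝ) × (κ → ℝ))).IsAddHaarMeasure :=
    Measure.prod.instIsAddHaarMeasure _ _
  rw [← hf, Measure.addHaar_preimage_linearMap _ (by
    rw [hdet]; exact prod_ne_zero_iff.2 fun i _ => hc i), hdet]

lemma integral_pow_mul_sub_pow (L : ℝ) (a b : ℕ) :
    ∫ x in (0 : ℝ)..L, x ^ a * (L - x) ^ b
      = a.factorial * b.factorial / (a + b + 1).factorial * L ^ (a + b + 1) := by
  induction b generalizing a with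
  | zero =>
    simp only [pow_zero, mul_one, integral_pow, Nat.factorial_zero, add_zero,
      Nat.factorial_succ, Nat.cast_mul]
    rw [zero_pow a.succ_ne_zero]
    field_simp
    push_cast
    ring
  | succ b ih =>
    have hsplit : ∫ x in (0 : ℝ)..L, x ^ a * (L - x) ^ (b + 1)
        = L * (∫ x in (0 : ℝ)..L, x ^ a * (L - x) ^ b)
          - ∫ x in (0 : ℝ)..L, x ^ (a + 1) * (L - x) ^ b := by
      rw [← intervalIntegral.integral_const_mul, ← intervalIntegral.integral_sub
        (Continuous.intervalIntegrable (by fun_prop) _ _)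
        (Continuous.intervalIntegrable (by fun_prop) _ _)]
      congr 1 with x
      ring
    rw [hsplit, ih, ih, show a + 1 + b + 1 = a + (b + 1) + 1 by ring]
    simp only [Nat.factorial_succ, Nat.cast_mul, show a + (b + 1) = a + b + 1 by ring]
    push_cast
    field_simp
    ring

lemma lintegral_simplex_prod_pow {L : ℝ} (hL : 0 ≤ L) (k : ℕ) (α : Fin k → ℕ) :
    ∫⁻ v in simplex k L, ENNReal.ofReal (∏ i, v i ^ α i)
      = ENNReal.ofReal ((∏ i, ((α i).factorial : ℝ)) * L ^ (k + ∑ i, α i)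
          / (k + ∑ i, α i).factorial) := by
  induction k generalizing L with
  | zero =>
    have : simplex 0 L = Set.univ := by ext v; simp [simplex, hL]
    simp [this, volume_pi]
  | succ k ih =>
    set b := k + ∑ i, α (Fin.succ i)
    set C := (∏ i, ((α (Fin.succ i)).factorial : ℝ)) / b.factorial with hC
    have hpre : (fun z : ℝ × (Fin k → ℝ) => (Fin.cons z.1 z.2 : Fin (k + 1) → ℝ)) ⁻¹'
        simplex (k + 1) L = fibredSimplex (Set.Icc 0 L) (fun t => L - t) k := by
      ext z; exact cons_mem_simplex_iff
    have hinner : ∀ t ∈ Set.Icc 0 L, ∫⁻ w in simplex k (L - t),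
        ENNReal.ofReal (∏ i, (Fin.cons t w : Fin (k + 1) → ℝ) i ^ α i)
          = ENNReal.ofReal (C * (t ^ α 0 * (L - t) ^ b)) := by
      intro t ht
      simp only [Fin.prod_univ_succ, Fin.cons_zero, Fin.cons_succ]
      rw [show C * (t ^ α 0 * (L - t) ^ b) = t ^ α 0 * (C * (L - t) ^ b) by ring,
        ENNReal.ofReal_mul (pow_nonneg ht.1 _), hC, div_mul_eq_mul_div, ← ih (sub_nonneg.2 ht.2),
        ← lintegral_const_mul' _ _ ENNReal.ofReal_ne_top]
      congr 1 with w
      exact ENNReal.ofReal_mul (pow_nonneg ht.1 _)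
    rw [← (measurePreserving_finCons k).setLIntegral_comp_preimage (measurableSet_simplex _ _)
      (by fun_prop), hpre, Measure.volume_eq_prod,
      setLIntegral_fibredSimplex _ measurableSet_Icc (by fun_prop) (by fun_prop),
      setLIntegral_congr_fun measurableSet_Icc hinner,
      ← ofReal_integral_eq_lintegral_ofReal (Continuous.integrableOn_Icc (by fun_prop))
        (ae_restrict_of_forall_mem measurableSet_Icc fun t ht => mul_nonneg (by positivity)
          (mul_nonneg (pow_nonneg ht.1 _) (pow_nonneg (sub_nonneg.2 ht.2) _))),
      integral_Icc_eq_integral_Ioc, ← intervalIntegral.integral_of_le hL,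
      intervalIntegral.integral_const_mul, integral_pow_mul_sub_pow, Fin.prod_univ_succ,
      Fin.sum_univ_succ, show α 0 + b + 1 = k + 1 + (α 0 + ∑ i, α (Fin.succ i)) by omega, hC]
    field_simp

lemma volume_simplex {L : ℝ} (hL : 0 ≤ L) (k : ℕ) :
    volume (simplex k L) = ENNReal.ofReal (L ^ k / k.factorial) := by
  simpa using lintegral_simplex_prod_pow hL k 0

lemma integral_simplex_prod_pow {L : ℝ} (hL : 0 ≤ L) (k : ℕ) (α : Fin k → ℕ) :
    ∫ v in simplex k L, ∏ i, v i ^ α i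
      = (∏ i, ((α i).factorial : ℝ)) * L ^ (k + ∑ i, α i) / (k + ∑ i, α i).factorial := by
  rw [integral_eq_lintegral_of_nonneg_ae
      (ae_restrict_of_forall_mem (measurableSet_simplex k L) fun v hv =>
        prod_nonneg fun i _ => pow_nonneg (hv.1 i) _)
      (Continuous.aestronglyMeasurable (by fun_prop)),
    lintegral_simplex_prod_pow hL, ENNReal.toReal_ofReal (by positivity)]

lemma volume_fibredSimplex {k m : ℕ} {A : Set (Fin k → ℝ)} (hA : IsCompact A)
    {f : (Fin k → ℝ) → ℝ} (hf : Continuous f) (hf₀ : ∀ x ∈ A, 0 ≤ f x) :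
    volume (fibredSimplex A f m) = ENNReal.ofReal (∫ x in A, f x ^ m / m.factorial) := by
  rw [Measure.volume_eq_prod, ← setLIntegral_one,
    setLIntegral_fibredSimplex _ hA.measurableSet hf.measurable measurable_const,
    ofReal_integral_eq_lintegral_ofReal
      ((Continuous.continuousOn (by fun_prop)).integrableOn_compact hA)
      (ae_restrict_of_forall_mem hA.measurableSet fun x hx => by
        have := hf₀ x hx; positivity)]
  exact setLIntegral_congr_fun hA.measurableSet fun x hx => by
    rw [setLIntegral_one, volume_simplex (hf₀ x hx)]

lemma Multiset.prod_map_eq_prod_pow_count {ι M : Type*} [Fintype ι] [DecidableEq ι]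
    [CommMonoid M] (m : Multiset ι) (f : ι → M) :
    (m.map f).prod = ∏ i, f i ^ m.count i := by
  rw [Finset.prod_multiset_map_count]
  exact prod_subset (subset_univ _) fun i _ hi => by
    rw [Multiset.count_eq_zero_of_notMem (by simpa using hi), pow_zero]

lemma Multiset.countPerms_mul_prod_factorial_count {ι : Type*} [Fintype ι] [DecidableEq ι]
    (m : Multiset ι) :
    m.countPerms * ∏ i, (m.count i).factorial = (Multiset.card m).factorial := by
  rw [Multiset.countPerms, Finsupp.multinomial_eq_of_support_subset (subset_univ _), mul_comm]
  simpa [Multiset.sum_count_eq_card] using Nat.multinomial_spec univ m.toFinsupp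

lemma integral_simplex_linear_pow {L : ℝ} (hL : 0 ≤ L) (k : ℕ) (p : Fin k → ℝ) (δ : ℕ) :
    ∫ v in simplex k L, (∑ j, p j * v j) ^ δ
      = δ.factorial * L ^ (k + δ) / (k + δ).factorial *
          ∑ m ∈ (univ : Finset (Fin k)).sym δ, ((m : Multiset (Fin k)).map p).prod := by
  have hterm : ∀ m ∈ (univ : Finset (Fin k)).sym δ,
      ∫ v in simplex k L, ((m : Multiset (Fin k)).countPerms : ℝ) *
          ((m : Multiset (Fin k)).map fun j => p j * v j).prod
        = δ.factorial * L ^ (k + δ) / (k + δ).factorial * ((m : Multiset (Fin k)).map p).prod := by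
    intro m _
    have hfac : ((m : Multiset (Fin k)).countPerms : ℝ) *
        ∏ i, (((m : Multiset (Fin k)).count i).factorial : ℝ) = δ.factorial := by
      exact_mod_cast (m : Multiset (Fin k)).countPerms_mul_prod_factorial_count.trans
        (by rw [Sym.card_coe])
    have hprod : ∀ v : Fin k → ℝ, ((m : Multiset (Fin k)).map fun j => p j * v j).prod
        = ((m : Multiset (Fin k)).map p).prod * ∏ i, v i ^ (m : Multiset (Fin k)).count i := by
      intro v
      rw [Multiset.prod_map_mul, Multiset.prod_map_eq_prod_pow_count _ v]
    simp_rw [hprod]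
    rw [integral_const_mul, integral_const_mul, integral_simplex_prod_pow hL,
      Multiset.sum_count_eq_card (by simp), Sym.card_coe, ← hfac]
    ring
  simp_rw [Finset.sum_pow]
  rw [integral_finsetSum _ fun m _ => (Continuous.continuousOn (by fun_prop)).integrableOn_compact
    (isCompact_simplex k L), mul_sum]
  exact sum_congr rfl hterm

lemma integral_simplex_sub_linear_pow_div {L : ℝ} (hL : 0 ≤ L) (k : ℕ) (p : Fin k → ℝ)
    (C : ℝ) (N : ℕ) :
    ∫ v in simplex k L, (C - ∑ j, p j * v j) ^ N / N.factorial
      = ∑ δ ∈ range (N + 1), (-1 : ℝ) ^ δ * (C ^ (N - δ) / (N - δ).factorial) *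
          (L ^ (k + δ) / (k + δ).factorial) *
          ∑ m ∈ (univ : Finset (Fin k)).sym δ, ((m : Multiset (Fin k)).map p).prod := by
  have hbinom : ∀ X : ℝ, (C - X) ^ N / N.factorial = ∑ δ ∈ range (N + 1),
      (-1 : ℝ) ^ δ * (C ^ (N - δ) / (N - δ).factorial) / δ.factorial * X ^ δ := by
    intro X
    rw [sub_eq_neg_add, add_pow, sum_div]
    refine sum_congr rfl fun δ hδ => ?_
    rw [Nat.cast_choose ℝ (Nat.le_of_lt_succ (mem_range.1 hδ)), neg_pow]
    field_simp
  simp_rw [hbinom]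
  rw [integral_finsetSum _ fun δ _ => (Continuous.continuousOn (by fun_prop)).integrableOn_compact
    (isCompact_simplex k L)]
  refine sum_congr rfl fun δ _ => ?_
  rw [integral_const_mul, integral_simplex_linear_pow hL]
  field_simp

lemma preimage_finAppend_eq_preimage_fibredSimplex {k m : ℕ} (hkn : k ≤ k + m) {p : Fin k → ℝ}
    (hp : ∀ j, 0 < p j) (D Λ : ℝ) :
    (fun z : (Fin k → ℝ) × (Fin m → ℝ) => Fin.append z.1 z.2) ⁻¹'
      {u | (∀ i, 0 ≤ u i) ∧ (∑ i, u i ≤ D) ∧ ∑ j : Fin k, u (Fin.castLE hkn j) / p j ≤ Λ}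
      = (fun z : (Fin k → ℝ) × (Fin m → ℝ) => (p⁻¹ * z.1, z.2)) ⁻¹'
          fibredSimplex (simplex k Λ) (fun v => D - ∑ j, p j * v j) m := by
  ext ⟨x, y⟩
  have hcast : ∀ j : Fin k, Fin.castLE hkn j = Fin.castAdd m j := fun j => rfl
  have hscale : ∀ j, p j * ((p j)⁻¹ * x j) = x j := fun j => mul_inv_cancel_left₀ (hp j).ne' _
  have hnonneg : ∀ j, 0 ≤ (p j)⁻¹ * x j ↔ 0 ≤ x j := fun j =>
    mul_nonneg_iff_of_pos_left (inv_pos.2 (hp j))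
  simp only [fibredSimplex, simplex, Set.mem_preimage, Set.mem_ofPred_eq, Fin.forall_fin_add,
    Fin.sum_univ_add, hcast, Fin.append_left, Fin.append_right, Pi.mul_apply, Pi.inv_apply, hscale,
    hnonneg, div_eq_inv_mul]
  constructor
  · rintro ⟨⟨hx, hy⟩, hsum, hweighted⟩
    exact ⟨⟨hx, hweighted⟩, hy, by linarith⟩
  · rintro ⟨⟨hx, hweighted⟩, hy, hsum⟩
    exact ⟨⟨hx, hy⟩, by linarith, hweighted⟩

/-- The volume of 𝔖₀ = { u ∈ ℝⁿ : u ≥ 0, Σuᵢ ≤ D, Σ_{j≤k} uⱼ/pⱼ ≤ Λ } equals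
p₁⋯p_k · Σ_{δ=0}^{n-k} (-1)^δ D^{n-k-δ}/(n-k-δ)! · Λ^{k+δ}/(δ+k)! · h_δ(p). -/
theorem stmt_8 (n k : ℕ) (hk1 : 1 ≤ k) (hkn : k ≤ n)
    (p : Fin k → ℝ) (hp : ∀ j, 0 < p j)
    (d : Fin n → ℝ) (hd : ∀ i j, p j ≤ d i)
    (l : Fin n → ℝ) (hl : ∀ i, 0 ≤ l i) :
    volume {u : Fin n → ℝ | (∀ i, 0 ≤ u i) ∧ (∑ i, u i ≤ ∑ i, l i * d i) ∧
        ∑ j : Fin k, u (Fin.castLE hkn j) / p j ≤ ∑ i, l i}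
      = ENNReal.ofReal ((∏ j, p j) *
          ∑ δ ∈ Finset.range (n - k + 1), (-1 : ℝ) ^ δ *
            ((∑ i, l i * d i) ^ (n - k - δ) / (n - k - δ).factorial) *
            ((∑ i, l i) ^ (k + δ) / (δ + k).factorial) *
            ∑ m ∈ (Finset.univ : Finset (Fin k)).sym δ,
              ((m : Multiset (Fin k)).map p).prod) := by
  obtain ⟨m, rfl⟩ : ∃ m, n = k + m := ⟨n - k, by omega⟩
  have hfibre : ∀ v ∈ simplex k (∑ i, l i), 0 ≤ ∑ i, l i * d i - ∑ j, p j * v j := fun v hv =>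
    sub_nonneg.2 (sum_mul_le_sum_mul_of_mem_simplex hk1 (fun j => (hp j).le) hd hl hv)
  have hS : MeasurableSet {u : Fin (k + m) → ℝ | (∀ i, 0 ≤ u i) ∧ (∑ i, u i ≤ ∑ i, l i * d i) ∧
      ∑ j : Fin k, u (Fin.castLE hkn j) / p j ≤ ∑ i, l i} := by
    measurability
  rw [← (measurePreserving_finAppend k m).measure_preimage hS.nullMeasurableSet,
    preimage_finAppend_eq_preimage_fibredSimplex hkn hp,
    volume_preimage_mul_fst (c := p⁻¹) fun j => inv_ne_zero (hp j).ne',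
    volume_fibredSimplex (isCompact_simplex k _) (by fun_prop) hfibre,
    integral_simplex_sub_linear_pow_div (sum_nonneg fun i _ => hl i),
    ← ENNReal.ofReal_mul (abs_nonneg _)]
  simp only [Pi.inv_apply, prod_inv_distrib, inv_inv, abs_of_pos (prod_pos fun j _ => hp j),
    Nat.add_sub_cancel_left]
  congr 2
  exact sum_congr rfl fun δ _ => by rw [Nat.add_comm δ k]
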